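/- arXiv:math/0701506 — 2 statements merged into one kernel-verified Lean document; each statement's English description precedes it below -/
import Mathlib

section
/- The linear map S₁ sending a linear map μ : ℝ³ → ℝ³ to the alternating bilinear map (v₁, v₂) ↦ 2 skw(v₁ μ(v₂)ᵀ − v₂ μ(v₁)ᵀ) with values in the skew-symmetric 3×3 matrices K is a linear bijection from Hom(ℝ³, ℝ³) onto the space of alternating K-valued bilinear forms on ℝ³, and its inverse satisfies, for every alternating K-valued bilinear form ω and all v₁, v₂, v₃ ∈ ℝ³: (S₁⁻¹ω)(v₁) · (v₂ × v₃) = (1/2)[vect(ω(v₂, v₃)) · v₁ − vect(ω(v₁, v₂)) · v₃ + vect(ω(v₁, v₃)) · v₂]. -/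
open Matrix

/-- The skew-symmetric part of a matrix: `skw F = (F − Fᵀ)/2`. -/
noncomputable def skw (F : Matrix (Fin 3) (Fin 3) ℝ) : Matrix (Fin 3) (Fin 3) ℝ :=
  (1 / 2 : ℝ) • (F - Fᵀ)

/-- The axial vector of a skew-symmetric 3×3 matrix: the unique `v` with
`W w = v × w` for all `w`. -/
noncomputable def vect (W : Matrix (Fin 3) (Fin 3) ℝ) : Fin 3 → ℝ :=
  ![W 2 1, W 0 2, W 1 0]

/-- The BGG operator `S₁`, sending a linear map `μ : ℝ³ → ℝ³` to the alternating
bilinear map `(v₁, v₂) ↦ 2 skw(v₁ μ(v₂)ᵀ − v₂ μ(v₁)ᵀ)` with values in the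
skew-symmetric 3×3 matrices. -/
noncomputable def S1 (μ : (Fin 3 → ℝ) →ₗ[ℝ] (Fin 3 → ℝ)) (v w : Fin 3 → ℝ) :
    Matrix (Fin 3) (Fin 3) ℝ :=
  (2 : ℝ) • skw (vecMulVec v (μ w) - vecMulVec w (μ v))

/-!
A skew matrix `W` is determined by its axial vector, `W x = vect W × x`, and
`vect (S₁ μ (v, w)) = μ w × v - μ v × w = (μᵀ - tr μ) (v × w)` by the classical identity
`M v × w + v × M w = (tr M - Mᵀ) (v × w)`. An alternating bilinear map on `ℝ³` factors
through the cross product, `vect ω(v, w) = B (v × w)`, so `S₁ μ = ω` amounts to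
`μᵀ - tr μ = B`, which is solved by `μ = Bᵀ - (tr B / 2)`. The inverse formula holds for
every `ω = S₁ μ`: expanding its right-hand side into triple products, all but two of them
cancel in pairs. Since the vectors `v₂ × v₃` span `ℝ³`, it also determines `μ`.
-/

theorem vec3_eq_sum_smul_single {R : Type*} [CommRing R] (v : Fin 3 → R) :
    v = v 0 • Pi.single 0 1 + v 1 • Pi.single 1 1 + v 2 • Pi.single 2 1 := by
  ext i; fin_cases i <;> simp

theorem LinearMap.IsAlt.exists_eq_comp_cross {R M : Type*} [CommRing R] [AddCommGroup M]
    [Module R M] {Ω : (Fin 3 → R) →ₗ[R] (Fin 3 → R) →ₗ[R] M} (hΩ : Ω.IsAlt) :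
    ∃ A : (Fin 3 → R) →ₗ[R] M, ∀ v w, Ω v w = A (v ⨯₃ w) := by
  refine ⟨Fintype.linearCombination R ![Ω (Pi.single 1 1) (Pi.single 2 1),
    Ω (Pi.single 2 1) (Pi.single 0 1), Ω (Pi.single 0 1) (Pi.single 1 1)], fun v w => ?_⟩
  rw [Fintype.linearCombination_apply, Fin.sum_univ_three, cross_apply]
  conv_lhs => rw [vec3_eq_sum_smul_single v, vec3_eq_sum_smul_single w]
  simp only [map_add, map_smul, LinearMap.add_apply, LinearMap.smul_apply, hΩ.self_eq_zero,
    ← hΩ.neg (Pi.single 0 1) (Pi.single 1 1), ← hΩ.neg (Pi.single 1 1) (Pi.single 2 1),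
    ← hΩ.neg (Pi.single 0 1) (Pi.single 2 1), smul_zero, zero_add, add_zero, cons_val_zero,
    cons_val_one, cons_val]
  module

theorem eq_of_forall_dotProduct_cross_eq {R : Type*} [CommRing R] {x y : Fin 3 → R}
    (h : ∀ a b, x ⬝ᵥ a ⨯₃ b = y ⬝ᵥ a ⨯₃ b) : x = y := by
  ext i
  fin_cases i
  · simpa [cross_apply, dotProduct, Fin.sum_univ_three] using h (Pi.single 1 1) (Pi.single 2 1)
  · simpa [cross_apply, dotProduct, Fin.sum_univ_three] using h (Pi.single 2 1) (Pi.single 0 1)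
  · simpa [cross_apply, dotProduct, Fin.sum_univ_three] using h (Pi.single 0 1) (Pi.single 1 1)

theorem mulVec_cross_add_cross_mulVec {R : Type*} [CommRing R] (M : Matrix (Fin 3) (Fin 3) R)
    (v w : Fin 3 → R) :
    (M *ᵥ v) ⨯₃ w + v ⨯₃ (M *ᵥ w) = (M.trace • 1 - Mᵀ) *ᵥ (v ⨯₃ w) := by
  ext i
  fin_cases i <;>
    simp only [cross_apply, mulVec, dotProduct, Fin.sum_univ_three, trace, diag_apply,
      Matrix.sub_apply, Matrix.smul_apply, transpose_apply, one_apply_eq, one_apply_ne, ne_eq,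
      Fin.reduceEq, not_false_eq_true, Pi.add_apply, cons_val_zero, cons_val_one, cons_val,
      Fin.isValue, Fin.zero_eta, Fin.mk_one, Fin.reduceFinMk, Nat.succ_eq_add_one, Nat.reduceAdd,
      smul_eq_mul] <;>
    ring

theorem mulVec_eq_vect_cross {W : Matrix (Fin 3) (Fin 3) ℝ} (hW : Wᵀ = -W) (x : Fin 3 → ℝ) :
    W *ᵥ x = vect W ⨯₃ x := by
  have h i j : W j i = -W i j := congrFun (congrFun hW i) j
  have hdiag i : W i i = 0 := by linarith [h i i]
  ext i
  fin_cases i <;>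
    simp only [mulVec, dotProduct, Fin.sum_univ_three, vect, cross_apply, hdiag, h 0 1, h 0 2,
      h 1 2, cons_val_zero, cons_val_one, cons_val, Fin.isValue, Fin.zero_eta, Fin.mk_one,
      Fin.reduceFinMk, Nat.succ_eq_add_one, Nat.reduceAdd] <;>
    ring

theorem eq_of_vect_eq {W W' : Matrix (Fin 3) (Fin 3) ℝ} (hW : Wᵀ = -W) (hW' : W'ᵀ = -W')
    (h : vect W = vect W') : W = W' :=
  ext_of_mulVec_single fun i => by rw [mulVec_eq_vect_cross hW, mulVec_eq_vect_cross hW', h]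

noncomputable def vectₗ : Matrix (Fin 3) (Fin 3) ℝ →ₗ[ℝ] Fin 3 → ℝ where
  toFun := vect
  map_add' _ _ := by ext i; fin_cases i <;> rfl
  map_smul' _ _ := by ext i; fin_cases i <;> rfl

theorem S1_add (μ₁ μ₂ : (Fin 3 → ℝ) →ₗ[ℝ] (Fin 3 → ℝ)) (v w : Fin 3 → ℝ) :
    S1 (μ₁ + μ₂) v w = S1 μ₁ v w + S1 μ₂ v w := by
  simp only [S1, skw, LinearMap.add_apply, vecMulVec_add, transpose_add, transpose_sub]
  module

theorem S1_smul (c : ℝ) (μ : (Fin 3 → ℝ) →ₗ[ℝ] (Fin 3 → ℝ)) (v w : Fin 3 → ℝ) :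
    S1 (c • μ) v w = c • S1 μ v w := by
  simp only [S1, skw, LinearMap.smul_apply, vecMulVec_smul, transpose_smul, transpose_sub]
  module

section S1

variable (μ : (Fin 3 → ℝ) →ₗ[ℝ] (Fin 3 → ℝ)) (v w : Fin 3 → ℝ)

theorem S1_transpose : (S1 μ v w)ᵀ = -S1 μ v w := by
  simp only [S1, skw, transpose_smul, transpose_sub, transpose_transpose]
  module

theorem S1_swap : S1 μ v w = -S1 μ w v := by
  simp only [S1, skw, transpose_sub]
  module

theorem vect_S1 : vect (S1 μ v w) = μ w ⨯₃ v - μ v ⨯₃ w := by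
  ext i
  fin_cases i <;>
    simp only [vect, S1, skw, vecMulVec, cross_apply, of_apply, Matrix.smul_apply,
      Matrix.sub_apply, transpose_apply, Pi.sub_apply, smul_eq_mul, cons_val_zero, cons_val_one,
      cons_val, Fin.isValue, Fin.zero_eta, Fin.mk_one, Fin.reduceFinMk, Nat.succ_eq_add_one,
      Nat.reduceAdd] <;>
    ring

theorem vect_S1_eq_mulVec_cross :
    vect (S1 μ v w) =
      ((LinearMap.toMatrix' μ)ᵀ - (LinearMap.toMatrix' μ).trace • 1) *ᵥ (v ⨯₃ w) := by
  have key := mulVec_cross_add_cross_mulVec (LinearMap.toMatrix' μ) v w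
  rw [LinearMap.toMatrix'_mulVec, LinearMap.toMatrix'_mulVec] at key
  rw [vect_S1, ← neg_sub _ (LinearMap.toMatrix' μ)ᵀ, neg_mulVec, ← key, ← cross_anticomm v]
  abel

theorem dotProduct_cross_eq_vect_S1 (v₁ v₂ v₃ : Fin 3 → ℝ) :
    μ v₁ ⬝ᵥ v₂ ⨯₃ v₃ = (1 / 2 : ℝ) * (vect (S1 μ v₂ v₃) ⬝ᵥ v₁ - vect (S1 μ v₁ v₂) ⬝ᵥ v₃ +
      vect (S1 μ v₁ v₃) ⬝ᵥ v₂) := by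
  simp only [vect_S1, cross_apply, dotProduct, Fin.sum_univ_three, Pi.sub_apply, cons_val_zero,
    cons_val_one, cons_val]
  ring

end S1

theorem exists_S1_eq (ω : (Fin 3 → ℝ) →ₗ[ℝ] (Fin 3 → ℝ) →ₗ[ℝ] Matrix (Fin 3) (Fin 3) ℝ)
    (hskew : ∀ v w, (ω v w)ᵀ = -ω v w) (halt : ω.IsAlt) : ∃ μ, ∀ v w, S1 μ v w = ω v w := by
  obtain ⟨A, hA⟩ := LinearMap.IsAlt.exists_eq_comp_cross (Ω := ω.compr₂ vectₗ) fun v => by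
    rw [LinearMap.compr₂_apply, halt.self_eq_zero, map_zero]
  set B := LinearMap.toMatrix' A
  have hB : (Bᵀ - (B.trace / 2) • 1)ᵀ - (Bᵀ - (B.trace / 2) • 1).trace • 1 = B := by
    simp only [transpose_sub, transpose_transpose, transpose_smul, transpose_one, trace_sub,
      trace_transpose, trace_smul, trace_one, Fintype.card_fin, smul_eq_mul]
    module
  refine ⟨Matrix.toLin' (Bᵀ - (B.trace / 2) • 1), fun v w =>
    eq_of_vect_eq (S1_transpose _ v w) (hskew v w) ?_⟩
  rw [vect_S1_eq_mulVec_cross, LinearMap.toMatrix'_toLin', hB, LinearMap.toMatrix'_mulVec]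
  exact (hA v w).symm

/-- `S₁` is a linear bijection from `Hom(ℝ³, ℝ³)` onto the space of alternating
`K`-valued bilinear forms on `ℝ³` (where `K` is the skew-symmetric 3×3 matrices),
and its inverse satisfies
`(S₁⁻¹ω)(v₁) · (v₂ × v₃) = ½[vect(ω(v₂,v₃))·v₁ − vect(ω(v₁,v₂))·v₃ + vect(ω(v₁,v₃))·v₂]`. -/
theorem S1_bijective_with_inverse_formula :
    -- S₁ is linear in μ
    (∀ (μ₁ μ₂ : (Fin 3 → ℝ) →ₗ[ℝ] (Fin 3 → ℝ)) (v w : Fin 3 → ℝ),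
        S1 (μ₁ + μ₂) v w = S1 μ₁ v w + S1 μ₂ v w) ∧
    (∀ (c : ℝ) (μ : (Fin 3 → ℝ) →ₗ[ℝ] (Fin 3 → ℝ)) (v w : Fin 3 → ℝ),
        S1 (c • μ) v w = c • S1 μ v w) ∧
    -- S₁ μ is an alternating bilinear form with values in the skew matrices
    (∀ (μ : (Fin 3 → ℝ) →ₗ[ℝ] (Fin 3 → ℝ)) (v w : Fin 3 → ℝ),
        (S1 μ v w)ᵀ = -(S1 μ v w) ∧ S1 μ v w = -(S1 μ w v)) ∧
    -- S₁ is a bijection onto that space, with the stated inverse formula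
    (∀ ω : (Fin 3 → ℝ) →ₗ[ℝ] (Fin 3 → ℝ) →ₗ[ℝ] Matrix (Fin 3) (Fin 3) ℝ,
        (∀ v w, (ω v w)ᵀ = -(ω v w)) → (∀ v w, ω v w = -(ω w v)) →
        ∃! μ : (Fin 3 → ℝ) →ₗ[ℝ] (Fin 3 → ℝ),
          (∀ v w, S1 μ v w = ω v w) ∧
          ∀ v₁ v₂ v₃ : Fin 3 → ℝ,
            (μ v₁) ⬝ᵥ (crossProduct v₂ v₃) =
              (1 / 2 : ℝ) * ((vect (ω v₂ v₃)) ⬝ᵥ v₁ - (vect (ω v₁ v₂)) ⬝ᵥ v₃ +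
                (vect (ω v₁ v₃)) ⬝ᵥ v₂)) := by
  refine ⟨S1_add, S1_smul, fun μ v w => ⟨S1_transpose μ v w, S1_swap μ v w⟩,
    fun ω hskew halt => ?_⟩
  have hω : ω.IsAlt := fun v => (self_eq_neg (G := Fin 3 → Fin 3 → ℝ)).mp (halt v v)
  obtain ⟨μ, hμ⟩ := exists_S1_eq ω hskew hω
  have hformula (v₁ v₂ v₃ : Fin 3 → ℝ) := hμ v₂ v₃ ▸ hμ v₁ v₂ ▸ hμ v₁ v₃ ▸
    dotProduct_cross_eq_vect_S1 μ v₁ v₂ v₃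
  refine ⟨μ, ⟨hμ, hformula⟩, fun μ' ⟨_, hμ'⟩ => LinearMap.ext fun v =>
    eq_of_forall_dotProduct_cross_eq fun a b => ?_⟩
  rw [hμ', hformula]
end

section
/- Let X₀,…,X₃, Y₀,…,Y₃ be real vector spaces with differentials d_k : X_k → X_{k+1}, d̃_k : Y_k → Y_{k+1} satisfying d² = 0 and d̃² = 0, K_k : Y_k → X_k linear, S_k := d_k K_k − K_{k+1} d̃_k, and A_k(ω, μ) := (d_k ω − S_k μ, d̃_k μ). Assume S₁ : Y₁ → X₂ is surjective with a linear right inverse S† : X₂ → Y₁ (so S₁ ∘ S† = id on X₂). Define Γ¹ = {(ω, μ) ∈ X₁ × Y₁ : d₁ ω = S₁ μ}, Γ² = {0} × Y₂ ⊆ X₂ × Y₂, π¹(ω, μ) = (ω, μ − S†S₁μ + S†d₁ω), and π²(ω, μ) = (0, μ + d̃₁ S† ω). Then: (i) A₀ maps X₀ × Y₀ into Γ¹, A₁ maps Γ¹ into Γ²; (ii) π¹ maps X₁ × Y₁ onto Γ¹ and restricts to the identity on Γ¹, π² maps X₂ × Y₂ onto Γ² and restricts to the identity on Γ²; (iii)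 π¹ ∘ A₀ = A₀, π² ∘ A₁ = A₁ ∘ π¹, and A₂ ∘ π² = A₂; and (iv) if the complex X₀×Y₀ → X₁×Y₁ → X₂×Y₂ → X₃×Y₃ with maps A_k is exact at degrees 1 and 2, then the subcomplex X₀×Y₀ →^{A₀} Γ¹ →^{A₁} Γ² →^{A₂} X₃×Y₃ is exact at Γ¹ and at Γ². -/
/-!
The BGG operators anticommute with the differentials, `d S_k = −S_{k+1} d̃`, so `A₀` lands in `Γ¹`,
the kernel of the first component of `A₁`. The right inverse `S†` corrects `μ` by `S†(d₁ω − S₁μ)`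
to land in `Γ¹`, and `π²` is the matching correction one degree up, so `π² A₁ = A₁ π¹`. Exactness at
`Γ²` follows by projecting a preimage `q` of `p ∈ Γ²` to `π¹ q ∈ Γ¹`, still a preimage since
`A₁(π¹ q) = π²(A₁ q) = π² p = p`.
-/

section BGG

variable {R : Type*} [Ring R]
  {X₀ X₁ X₂ Y₀ Y₁ Y₂ : Type*}
  [AddCommGroup X₀] [Module R X₀] [AddCommGroup X₁] [Module R X₁] [AddCommGroup X₂] [Module R X₂]
  [AddCommGroup Y₀] [Module R Y₀] [AddCommGroup Y₁] [Module R Y₁] [AddCommGroup Y₂] [Module R Y₂]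

theorem comp_bgg_eq_neg_bgg_comp {d₀ : X₀ →ₗ[R] X₁} {d₁ : X₁ →ₗ[R] X₂}
    {e₀ : Y₀ →ₗ[R] Y₁} {e₁ : Y₁ →ₗ[R] Y₂} (hd : d₁ ∘ₗ d₀ = 0) (he : e₁ ∘ₗ e₀ = 0)
    (K₀ : Y₀ →ₗ[R] X₀) (K₁ : Y₁ →ₗ[R] X₁) (K₂ : Y₂ →ₗ[R] X₂) :
    d₁ ∘ₗ (d₀ ∘ₗ K₀ - K₁ ∘ₗ e₀) = -((d₁ ∘ₗ K₁ - K₂ ∘ₗ e₁) ∘ₗ e₀) := by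
  rw [LinearMap.comp_sub, LinearMap.sub_comp, ← LinearMap.comp_assoc K₀ d₀ d₁, hd,
    LinearMap.comp_assoc e₀ e₁ K₂, he, LinearMap.zero_comp, LinearMap.comp_zero,
    LinearMap.comp_assoc e₀ K₁ d₁]
  abel

def twistedDiff (d : X₀ →ₗ[R] X₁) (e : Y₀ →ₗ[R] Y₁) (S : Y₀ →ₗ[R] X₁) :
    X₀ × Y₀ →ₗ[R] X₁ × Y₁ :=
  (d ∘ₗ LinearMap.fst R X₀ Y₀ - S ∘ₗ LinearMap.snd R X₀ Y₀).prod (e ∘ₗ LinearMap.snd R X₀ Y₀)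

@[simp]
theorem twistedDiff_apply (d : X₀ →ₗ[R] X₁) (e : Y₀ →ₗ[R] Y₁) (S : Y₀ →ₗ[R] X₁) (p : X₀ × Y₀) :
    twistedDiff d e S p = (d p.1 - S p.2, e p.2) :=
  rfl

theorem map_fst_twistedDiff {d₀ : X₀ →ₗ[R] X₁} {d₁ : X₁ →ₗ[R] X₂} {e₀ : Y₀ →ₗ[R] Y₁}
    {S₀ : Y₀ →ₗ[R] X₁} {S₁ : Y₁ →ₗ[R] X₂} (hd : d₁ ∘ₗ d₀ = 0) (hS : d₁ ∘ₗ S₀ = -(S₁ ∘ₗ e₀))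
    (p : X₀ × Y₀) : d₁ (twistedDiff d₀ e₀ S₀ p).1 = S₁ (twistedDiff d₀ e₀ S₀ p).2 := by
  have hdd := LinearMap.congr_fun hd p.1
  have hdS := LinearMap.congr_fun hS p.2
  simp only [LinearMap.comp_apply, LinearMap.zero_apply, LinearMap.neg_apply] at hdd hdS
  simp [hdd, hdS]

def bggProj₁ (d : X₀ →ₗ[R] X₁) (S : Y₀ →ₗ[R] X₁) (Sdag : X₁ →ₗ[R] Y₀) (p : X₀ × Y₀) :
    X₀ × Y₀ :=
  (p.1, p.2 - Sdag (S p.2) + Sdag (d p.1))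

def bggProj₂ (e : Y₀ →ₗ[R] Y₁) (Sdag : X₁ →ₗ[R] Y₀) (p : X₁ × Y₁) : X₁ × Y₁ :=
  (0, p.2 + e (Sdag p.1))

theorem map_snd_bggProj₁ {S : Y₀ →ₗ[R] X₁} {Sdag : X₁ →ₗ[R] Y₀}
    (hS : Function.RightInverse Sdag S) (d : X₀ →ₗ[R] X₁) (p : X₀ × Y₀) :
    S (bggProj₁ d S Sdag p).2 = d (bggProj₁ d S Sdag p).1 := by
  simp [bggProj₁, hS _]

theorem bggProj₁_eq_self {d : X₀ →ₗ[R] X₁} {S : Y₀ →ₗ[R] X₁} (Sdag : X₁ →ₗ[R] Y₀)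
    {p : X₀ × Y₀} (hp : d p.1 = S p.2) : bggProj₁ d S Sdag p = p := by
  simp [bggProj₁, hp]

theorem bggProj₂_eq_self (e : Y₀ →ₗ[R] Y₁) (Sdag : X₁ →ₗ[R] Y₀) {p : X₁ × Y₁}
    (hp : p.1 = 0) : bggProj₂ e Sdag p = p := by
  simp [bggProj₂, hp, Prod.ext_iff]

theorem bggProj₂_twistedDiff {S : Y₀ →ₗ[R] X₁} {Sdag : X₁ →ₗ[R] Y₀}
    (hS : Function.RightInverse Sdag S) (d : X₀ →ₗ[R] X₁) (e : Y₀ →ₗ[R] Y₁) (p : X₀ × Y₀) :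
    bggProj₂ e Sdag (twistedDiff d e S p) = twistedDiff d e S (bggProj₁ d S Sdag p) := by
  ext
  · simp [bggProj₁, bggProj₂, hS _]
  · simp only [bggProj₁, bggProj₂, twistedDiff_apply, map_add, map_sub]
    abel

theorem twistedDiff_bggProj₂ {S₀ : Y₀ →ₗ[R] X₁} {Sdag : X₁ →ₗ[R] Y₀}
    (hS : Function.RightInverse Sdag S₀) {d₁ : X₁ →ₗ[R] X₂} {e₀ : Y₀ →ₗ[R] Y₁}
    {S₁ : Y₁ →ₗ[R] X₂} (hdS : d₁ ∘ₗ S₀ = -(S₁ ∘ₗ e₀)) {e₁ : Y₁ →ₗ[R] Y₂} (he : e₁ ∘ₗ e₀ = 0)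
    (p : X₁ × Y₁) : twistedDiff d₁ e₁ S₁ (bggProj₂ e₀ Sdag p) = twistedDiff d₁ e₁ S₁ p := by
  -- `S₁ e₀ S† ω = −d₁ S₀ S† ω = −d₁ ω`
  have hSe : S₁ (e₀ (Sdag p.1)) = -d₁ p.1 := by
    refine neg_eq_iff_eq_neg.mp ?_
    simpa [hS _] using (LinearMap.congr_fun hdS (Sdag p.1)).symm
  have hee := LinearMap.congr_fun he (Sdag p.1)
  simp only [LinearMap.comp_apply, LinearMap.zero_apply] at hee
  ext
  · simp only [bggProj₂, twistedDiff_apply, map_zero, map_add, hSe]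
    abel
  · simp [bggProj₂, hee]

end BGG

theorem forall_mem_exact_of_proj {α β γ : Type*} [Zero γ] {f : α → β} {g : β → γ}
    {Γ₁ : Set α} {Γ₂ : Set β} {π₁ : α → α} {π₂ : β → β} (hfg : Function.Exact f g)
    (hπ₁ : ∀ q, π₁ q ∈ Γ₁) (hπ₂ : ∀ p ∈ Γ₂, π₂ p = p) (hf : ∀ q, π₂ (f q) = f (π₁ q)) :
    ∀ p ∈ Γ₂, g p = 0 ↔ ∃ q ∈ Γ₁, f q = p := by
  intro p hp
  constructor
  · intro hgp
    obtain ⟨q, rfl⟩ := (hfg p).1 hgp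
    exact ⟨π₁ q, hπ₁ q, by rw [← hf, hπ₂ _ hp]⟩
  · rintro ⟨q, -, rfl⟩
    exact (hfg _).2 ⟨q, rfl⟩

/-- The abstract discrete elasticity complex theorem: given two complexes `(X, d)`,
`(Y, e)` with `d² = 0`, `e² = 0`, connecting maps `K_k`, BGG operators
`S_k = d_k K_k − K_{k+1} e_k`, twisted differentials `A_k(ω, μ) = (d_k ω − S_k μ, e_k μ)`,
and a linear right inverse `S†` of `S₁`, with
`Γ¹ = {(ω, μ) : d₁ ω = S₁ μ}`, `Γ² = {0} × Y₂`,
`π¹(ω, μ) = (ω, μ − S†S₁μ + S†d₁ω)`, `π²(ω, μ) = (0, μ + e₁ S† ω)`: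
(i) `A₀` maps into `Γ¹` and `A₁` maps `Γ¹` into `Γ²`;
(ii) `π¹`, `π²` are projections onto `Γ¹`, `Γ²`;
(iii) `π¹A₀ = A₀`, `π²A₁ = A₁π¹`, `A₂π² = A₂`;
(iv) exactness of the twisted complex at degrees 1 and 2 implies exactness of the
subcomplex at `Γ¹` and `Γ²`. -/
theorem discrete_BGG_subcomplex
    {X0 X1 X2 X3 Y0 Y1 Y2 Y3 : Type*}
    [AddCommGroup X0] [Module ℝ X0] [AddCommGroup X1] [Module ℝ X1]
    [AddCommGroup X2] [Module ℝ X2] [AddCommGroup X3] [Module ℝ X3]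
    [AddCommGroup Y0] [Module ℝ Y0] [AddCommGroup Y1] [Module ℝ Y1]
    [AddCommGroup Y2] [Module ℝ Y2] [AddCommGroup Y3] [Module ℝ Y3]
    (d0 : X0 →ₗ[ℝ] X1) (d1 : X1 →ₗ[ℝ] X2) (d2 : X2 →ₗ[ℝ] X3)
    (e0 : Y0 →ₗ[ℝ] Y1) (e1 : Y1 →ₗ[ℝ] Y2) (e2 : Y2 →ₗ[ℝ] Y3)
    (hd0 : d1 ∘ₗ d0 = 0) (hd1 : d2 ∘ₗ d1 = 0)
    (he0 : e1 ∘ₗ e0 = 0) (he1 : e2 ∘ₗ e1 = 0)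
    (K0 : Y0 →ₗ[ℝ] X0) (K1 : Y1 →ₗ[ℝ] X1) (K2 : Y2 →ₗ[ℝ] X2) (K3 : Y3 →ₗ[ℝ] X3)
    (S0 : Y0 →ₗ[ℝ] X1) (S1 : Y1 →ₗ[ℝ] X2) (S2 : Y2 →ₗ[ℝ] X3)
    (hS0 : S0 = d0 ∘ₗ K0 - K1 ∘ₗ e0)
    (hS1 : S1 = d1 ∘ₗ K1 - K2 ∘ₗ e1)
    (hS2 : S2 = d2 ∘ₗ K2 - K3 ∘ₗ e2)
    (Sdag : X2 →ₗ[ℝ] Y1) (hdag : S1 ∘ₗ Sdag = LinearMap.id)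
    (A0 : X0 × Y0 → X1 × Y1) (hA0 : ∀ p, A0 p = (d0 p.1 - S0 p.2, e0 p.2))
    (A1 : X1 × Y1 → X2 × Y2) (hA1 : ∀ p, A1 p = (d1 p.1 - S1 p.2, e1 p.2))
    (A2 : X2 × Y2 → X3 × Y3) (hA2 : ∀ p, A2 p = (d2 p.1 - S2 p.2, e2 p.2))
    (Γ1 : Set (X1 × Y1)) (hΓ1 : Γ1 = {p | d1 p.1 = S1 p.2})
    (Γ2 : Set (X2 × Y2)) (hΓ2 : Γ2 = {p | p.1 = 0})
    (π1 : X1 × Y1 → X1 × Y1)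
    (hπ1 : ∀ p, π1 p = (p.1, p.2 - Sdag (S1 p.2) + Sdag (d1 p.1)))
    (π2 : X2 × Y2 → X2 × Y2)
    (hπ2 : ∀ p, π2 p = (0, p.2 + e1 (Sdag p.1))) :
    -- (i)
    ((∀ p : X0 × Y0, A0 p ∈ Γ1) ∧ (∀ p ∈ Γ1, A1 p ∈ Γ2)) ∧
    -- (ii)
    ((∀ p : X1 × Y1, π1 p ∈ Γ1) ∧ (∀ p ∈ Γ1, π1 p = p) ∧
     (∀ p : X2 × Y2, π2 p ∈ Γ2) ∧ (∀ p ∈ Γ2, π2 p = p)) ∧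
    -- (iii)
    ((∀ p : X0 × Y0, π1 (A0 p) = A0 p) ∧
     (∀ p : X1 × Y1, π2 (A1 p) = A1 (π1 p)) ∧
     (∀ p : X2 × Y2, A2 (π2 p) = A2 p)) ∧
    -- (iv)
    ((∀ p : X1 × Y1, A1 p = 0 ↔ ∃ q, A0 q = p) →
     (∀ p : X2 × Y2, A2 p = 0 ↔ ∃ q, A1 q = p) →
     ((∀ p ∈ Γ1, (A1 p = 0 ↔ ∃ q, A0 q = p)) ∧
      (∀ p ∈ Γ2, (A2 p = 0 ↔ ∃ q ∈ Γ1, A1 q = p)))) := by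
  obtain rfl : A0 = twistedDiff d0 e0 S0 := funext hA0
  obtain rfl : A1 = twistedDiff d1 e1 S1 := funext hA1
  obtain rfl : A2 = twistedDiff d2 e2 S2 := funext hA2
  obtain rfl : π1 = bggProj₁ d1 S1 Sdag := funext hπ1
  obtain rfl : π2 = bggProj₂ e1 Sdag := funext hπ2
  subst hΓ1 hΓ2
  have hright : Function.RightInverse Sdag S1 := LinearMap.congr_fun hdag
  have hdS0 : d1 ∘ₗ S0 = -(S1 ∘ₗ e0) := by
    rw [hS0, hS1]; exact comp_bgg_eq_neg_bgg_comp hd0 he0 K0 K1 K2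
  have hdS1 : d2 ∘ₗ S1 = -(S2 ∘ₗ e1) := by
    rw [hS1, hS2]; exact comp_bgg_eq_neg_bgg_comp hd1 he1 K1 K2 K3
  have hA0Γ1 := map_fst_twistedDiff hd0 hdS0
  have hπ1Γ1 := fun p => (map_snd_bggProj₁ hright d1 p).symm
  have hπ2A1 := bggProj₂_twistedDiff hright d1 e1
  have hπ2Γ2 : ∀ p ∈ {p : X2 × Y2 | p.1 = 0}, bggProj₂ e1 Sdag p = p :=
    fun _ hp => bggProj₂_eq_self e1 Sdag hp
  refine ⟨⟨hA0Γ1, fun p hp => sub_eq_zero.2 hp⟩,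
    ⟨hπ1Γ1, fun p hp => bggProj₁_eq_self Sdag hp, fun p => rfl, hπ2Γ2⟩,
    ⟨fun p => bggProj₁_eq_self Sdag (hA0Γ1 p), hπ2A1, twistedDiff_bggProj₂ hright hdS1 he1⟩,
    fun hexact₁ hexact₂ => ⟨fun p _ => hexact₁ p, ?_⟩⟩
  exact forall_mem_exact_of_proj hexact₂ hπ1Γ1 hπ2Γ2 hπ2A1
end
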